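/- arXiv:1709.01629 — 9 statements merged into one kernel-verified Lean document; each statement's English description precedes it below -/
import Mathlib

section
/- For every power-allocation coefficient b with 0 ≤ b < 1, the QoS constraint min(γ_p(b), γ_{s→p}(b)) ≥ γ holds if and only if b ≤ (β·ρ − γ)/((γ + 1)·β·ρ), where β = min(h, g). -/
/-! Clearing the (positive) denominators turns `γ ≤ γ_p(b)` into a linear condition
`b ≤ (xρ - γ)/((γ + 1)xρ)` on `b`, where `x` is the channel gain. This threshold
`1/(γ + 1) - γ/((γ + 1)xρ)` is increasing in `x`, so the threshold of the weaker channel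
`β = min h g` is the minimum of the two thresholds. -/

lemma le_sinr_iff {ρ x γ b : ℝ} (hρ : 0 < ρ) (hx : 0 < x) (hγ : 0 < γ + 1) (hb : 0 ≤ b) :
    γ ≤ (1 - b) * x / (b * x + 1 / ρ) ↔ b ≤ (x * ρ - γ) / ((γ + 1) * x * ρ) := by
  rw [le_div_iff₀ (by positivity), le_div_iff₀ (by positivity)]
  have hρ_inv : 1 / ρ * ρ = 1 := one_div_mul_cancel hρ.ne'
  constructor
  · intro h
    nlinarith [mul_le_mul_of_nonneg_right h hρ.le]
  · intro h
    nlinarith [mul_pos hρ hx, mul_le_mul_of_nonneg_right h hρ.le]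

lemma sinrThreshold_mono {ρ γ x y : ℝ} (hρ : 0 < ρ) (hγ : 0 ≤ γ) (hx : 0 < x) (hxy : x ≤ y) :
    (x * ρ - γ) / ((γ + 1) * x * ρ) ≤ (y * ρ - γ) / ((γ + 1) * y * ρ) := by
  have hy : 0 < y := hx.trans_le hxy
  rw [div_le_div_iff₀ (by positivity) (by positivity)]
  nlinarith [mul_nonneg (mul_nonneg hρ.le hγ) (add_nonneg hγ zero_le_one)]

lemma sinrThreshold_min {ρ γ x y : ℝ} (hρ : 0 < ρ) (hγ : 0 ≤ γ) (hx : 0 < x) (hy : 0 < y) :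
    (min x y * ρ - γ) / ((γ + 1) * min x y * ρ) =
      min ((x * ρ - γ) / ((γ + 1) * x * ρ)) ((y * ρ - γ) / ((γ + 1) * y * ρ)) := by
  rcases le_total x y with hxy | hyx
  · rw [min_eq_left hxy, min_eq_left (sinrThreshold_mono hρ hγ hx hxy)]
  · rw [min_eq_right hyx, min_eq_right (sinrThreshold_mono hρ hγ hy hyx)]

theorem stmt0_general (ρ h g γ b : ℝ) (hρ : 0 < ρ) (hh : 0 < h) (hg : 0 < g) (hγ : 0 < γ)
    (hb0 : 0 ≤ b) :
    min ((1 - b) * h / (b * h + 1 / ρ)) ((1 - b) * g / (b * g + 1 / ρ)) ≥ γ ↔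
      b ≤ (min h g * ρ - γ) / ((γ + 1) * (min h g) * ρ) := by
  have hγ1 : 0 < γ + 1 := by linarith
  rw [ge_iff_le, le_min_iff, le_sinr_iff hρ hh hγ1 hb0, le_sinr_iff hρ hg hγ1 hb0,
    sinrThreshold_min hρ hγ.le hh hg, le_min_iff]

/-- In a two-user downlink NOMA system with transmit SNR `ρ > 0`,
power-allocation coefficient `b` (with `a = 1 - b`, `0 ≤ b < 1`), primary channel gain
`h > 0`, secondary channel gain `g > 0`, and primary QoS threshold `γ > 0`, the QoS
constraint `min (γ_p b) (γ_sp b) ≥ γ` holds iff `b ≤ (β·ρ - γ)/((γ+1)·β·ρ)`,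
where `β = min h g`. -/
theorem stmt0 (ρ h g γ b : ℝ) (hρ : 0 < ρ) (hh : 0 < h) (hg : 0 < g) (hγ : 0 < γ)
    (hb0 : 0 ≤ b) (hb1 : b < 1) :
    min ((1 - b) * h / (b * h + 1 / ρ)) ((1 - b) * g / (b * g + 1 / ρ)) ≥ γ ↔
      b ≤ (min h g * ρ - γ) / ((γ + 1) * (min h g) * ρ) :=
  stmt0_general ρ h g γ b hρ hh hg hγ hb0
end

section
/- If β·ρ ≥ γ, then b* = (β·ρ − γ)/((γ + 1)·β·ρ) satisfies 0 ≤ b* < 1 and min(γ_p(b*), γ_{s→p}(b*)) ≥ γ, and b* maximizes the secondary SNR γ_s(b) = b·g·ρ over all b ∈ [0, 1) satisfying min(γ_p(b), γ_{s→p}(b)) ≥ γ; if β·ρ < γ, then no b ∈ [0, 1) satisfies min(γ_p(b), γ_{s→p}(b)) ≥ γ. -/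
/-!
Clearing the positive denominator `b c + 1/ρ` turns the QoS constraint `γ ≤ (1-b)c/(bc + 1/ρ)`
for a single channel gain `c` into the linear bound `b ≤ (cρ - γ)/((γ+1)cρ)`. Since
this threshold is increasing in `c`, the constraint for both users is exactly the bound for
the weaker channel `β = min h g`, so the feasible set is `[0, b*]` (empty when `βρ < γ`),
and the secondary SNR `b g ρ`, increasing in `b`, is maximised at `b*`.
-/

/-- The largest power coefficient `b` meeting the QoS threshold `γ` on a channel of gain `c`. -/
noncomputable def qosThreshold (ρ γ c : ℝ) : ℝ := (c * ρ - γ) / ((γ + 1) * c * ρ)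

variable {ρ γ c : ℝ}

theorem le_sinr_iff_le_qosThreshold {b : ℝ} (hρ : 0 < ρ) (hc : 0 < c) (hγ : 0 < γ + 1)
    (hb : 0 ≤ b) : γ ≤ (1 - b) * c / (b * c + 1 / ρ) ↔ b ≤ qosThreshold ρ γ c := by
  unfold qosThreshold
  have hclear : (1 - b) * c - γ * (b * c + 1 / ρ) = (c * ρ - γ - b * ((γ + 1) * c * ρ)) / ρ := by
    field_simp
    ring
  rw [le_div_iff₀ (by positivity), le_div_iff₀ (by positivity), ← sub_nonneg, hclear,
    le_div_iff₀ hρ, zero_mul, sub_nonneg]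

theorem qosThreshold_mono {c' : ℝ} (hρ : 0 < ρ) (hγ : 0 ≤ γ) (hc : 0 < c) (hcc' : c ≤ c') :
    qosThreshold ρ γ c ≤ qosThreshold ρ γ c' := by
  have hc' : 0 < c' := hc.trans_le hcc'
  unfold qosThreshold
  rw [div_le_div_iff₀ (by positivity) (by positivity)]
  nlinarith [mul_nonneg (mul_nonneg hγ (by positivity : (0 : ℝ) ≤ (γ + 1) * ρ)) (sub_nonneg.2 hcc')]

theorem qosThreshold_nonneg (hρ : 0 < ρ) (hc : 0 < c) (hγ : 0 < γ + 1) (hcγ : γ ≤ c * ρ) :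
    0 ≤ qosThreshold ρ γ c :=
  div_nonneg (sub_nonneg.2 hcγ) (by positivity)

theorem qosThreshold_neg (hρ : 0 < ρ) (hc : 0 < c) (hγ : 0 < γ + 1) (hcγ : c * ρ < γ) :
    qosThreshold ρ γ c < 0 :=
  div_neg_of_neg_of_pos (sub_neg.2 hcγ) (by positivity)

theorem qosThreshold_lt_one (hρ : 0 < ρ) (hc : 0 < c) (hγ : 0 < γ) : qosThreshold ρ γ c < 1 := by
  unfold qosThreshold
  rw [div_lt_one (by positivity)]
  nlinarith [mul_pos hγ (mul_pos hc hρ)]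

theorem le_min_sinr_iff_le_qosThreshold {h g b : ℝ} (hρ : 0 < ρ) (hh : 0 < h) (hg : 0 < g)
    (hγ : 0 ≤ γ) (hb : 0 ≤ b) :
    γ ≤ min ((1 - b) * h / (b * h + 1 / ρ)) ((1 - b) * g / (b * g + 1 / ρ)) ↔
      b ≤ qosThreshold ρ γ (min h g) := by
  have hγ1 : 0 < γ + 1 := by linarith
  rw [le_min_iff, le_sinr_iff_le_qosThreshold hρ hh hγ1 hb,
    le_sinr_iff_le_qosThreshold hρ hg hγ1 hb]
  rcases le_total h g with hhg | hgh
  · rw [min_eq_left hhg]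
    exact and_iff_left_of_imp fun H => H.trans (qosThreshold_mono hρ hγ hh hhg)
  · rw [min_eq_right hgh]
    exact and_iff_right_of_imp fun H => H.trans (qosThreshold_mono hρ hγ hg hgh)

/-- With `γ_p b = (1-b)·h/(b·h + 1/ρ)`, `γ_sp b = (1-b)·g/(b·g + 1/ρ)`,
`γ_s b = b·g·ρ` and `β = min h g`:
if `β·ρ ≥ γ`, then `b* = (β·ρ - γ)/((γ+1)·β·ρ)` satisfies `0 ≤ b* < 1`, meets the
QoS constraint `min (γ_p b*) (γ_sp b*) ≥ γ`, and maximizes the secondary SNR `γ_s b`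
over all feasible `b ∈ [0,1)`; if `β·ρ < γ`, no `b ∈ [0,1)` is feasible. -/
theorem stmt1 (ρ h g γ : ℝ) (hρ : 0 < ρ) (hh : 0 < h) (hg : 0 < g) (hγ : 0 < γ) :
    (min h g * ρ ≥ γ →
      (0 ≤ (min h g * ρ - γ) / ((γ + 1) * (min h g) * ρ) ∧
        (min h g * ρ - γ) / ((γ + 1) * (min h g) * ρ) < 1) ∧
      min ((1 - (min h g * ρ - γ) / ((γ + 1) * (min h g) * ρ)) * h /
            ((min h g * ρ - γ) / ((γ + 1) * (min h g) * ρ) * h + 1 / ρ))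
          ((1 - (min h g * ρ - γ) / ((γ + 1) * (min h g) * ρ)) * g /
            ((min h g * ρ - γ) / ((γ + 1) * (min h g) * ρ) * g + 1 / ρ)) ≥ γ ∧
      (∀ b : ℝ, 0 ≤ b → b < 1 →
        min ((1 - b) * h / (b * h + 1 / ρ)) ((1 - b) * g / (b * g + 1 / ρ)) ≥ γ →
        b * g * ρ ≤ (min h g * ρ - γ) / ((γ + 1) * (min h g) * ρ) * g * ρ)) ∧
    (min h g * ρ < γ →
      ∀ b : ℝ, 0 ≤ b → b < 1 →
        ¬ min ((1 - b) * h / (b * h + 1 / ρ)) ((1 - b) * g / (b * g + 1 / ρ)) ≥ γ) := by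
  have hβ : 0 < min h g := lt_min hh hg
  have hγ1 : 0 < γ + 1 := by linarith
  have feasible_iff := fun (b : ℝ) (hb : 0 ≤ b) =>
    le_min_sinr_iff_le_qosThreshold (γ := γ) hρ hh hg hγ.le hb
  refine ⟨fun hβγ => ?_, fun hβγ b hb _ hfeas => ?_⟩
  · have hstar := qosThreshold_nonneg hρ hβ hγ1 hβγ
    refine ⟨⟨hstar, qosThreshold_lt_one hρ hβ hγ⟩, (feasible_iff _ hstar).2 le_rfl,
      fun b hb _ hfeas => ?_⟩
    have hle : b ≤ qosThreshold ρ γ (min h g) := (feasible_iff b hb).1 hfeas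
    gcongr
    exact hle
  · linarith [(feasible_iff b hb).1 hfeas, qosThreshold_neg hρ hβ hγ1 hβγ]
end

section
/- If β·ρ > γ and b = (β·ρ − γ)/((γ + 1)·β·ρ) with a = 1 − b, then min(γ_p(b), γ_{s→p}(b)) = γ, i.e., with the optimal power allocation the QoS constraint of the primary user is met with equality at the weaker of the two channels. -/
/-!
On `x ≥ 0` the map `x ↦ a x / (b x + c)` with `a, b ≥ 0`, `c > 0` is nondecreasing, so the smaller
of the two SINRs is the one at `β = min h g`. With `b = (βρ - γ)/((γ+1)βρ)` one has
`a = γ(βρ + 1)/((γ+1)βρ)` and `bβ + 1/ρ = (βρ + 1)/((γ+1)ρ)`, whose quotient `aβ / (bβ + 1/ρ)` is `γ`.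
-/

theorem monotoneOn_mul_div_mul_add {a b c : ℝ} (ha : 0 ≤ a) (hb : 0 ≤ b) (hc : 0 < c) :
    MonotoneOn (fun x ↦ a * x / (b * x + c)) (Set.Ici 0) := by
  intro x hx y hy hxy
  have hx' : 0 < b * x + c := by have := hx.out; positivity
  have hy' : 0 < b * y + c := by have := hy.out; positivity
  rw [div_le_div_iff₀ hx' hy']
  nlinarith [mul_nonneg (mul_nonneg ha hc.le) (sub_nonneg.2 hxy)]

theorem sinr_eq_threshold_of_allocation_eq {ρ β γ b : ℝ} (hρ : 0 < ρ) (hβ : 0 < β) (hγ : γ + 1 ≠ 0)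
    (hb : b = (β * ρ - γ) / ((γ + 1) * β * ρ)) :
    (1 - b) * β / (b * β + 1 / ρ) = γ := by
  have hden : b * β + 1 / ρ = (β * ρ + 1) / ((γ + 1) * ρ) := by
    rw [hb]; field_simp; ring
  have hβρ : β * ρ + 1 ≠ 0 := by positivity
  rw [hden, hb]
  field_simp
  ring

/-- If `β·ρ > γ` (with `β = min h g`) and
`b = (β·ρ - γ)/((γ+1)·β·ρ)`, `a = 1 - b`, then the QoS constraint of the primary
user is met with equality at the weaker channel:
`min (a·h/(b·h + 1/ρ)) (a·g/(b·g + 1/ρ)) = γ`. -/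
theorem stmt2 (ρ h g γ b a : ℝ) (hρ : 0 < ρ) (hh : 0 < h) (hg : 0 < g) (hγ : 0 < γ)
    (hβρ : min h g * ρ > γ)
    (hb : b = (min h g * ρ - γ) / ((γ + 1) * (min h g) * ρ)) (ha : a = 1 - b) :
    min (a * h / (b * h + 1 / ρ)) (a * g / (b * g + 1 / ρ)) = γ := by
  have hβ : 0 < min h g := lt_min hh hg
  have hden : 0 < (γ + 1) * min h g * ρ := by positivity
  have hb0 : 0 ≤ b := hb ▸ div_nonneg (by linarith) hden.le
  have ha0 : 0 ≤ a := by
    rw [ha, hb, sub_nonneg, div_le_one hden]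
    nlinarith [mul_pos hβ hρ]
  have hmono := monotoneOn_mul_div_mul_add ha0 hb0 (one_div_pos.2 hρ)
  rw [← hmono.map_min (Set.mem_Ici.2 hh.le) (Set.mem_Ici.2 hg.le), ha]
  exact sinr_eq_threshold_of_allocation_eq hρ hβ (by positivity) hb
end

section
/- Let N, M, K be positive integers and let H : Fin N → Fin M → ℝ and G : Fin N → Fin K → ℝ take positive values. Then the maximum of f(H n m, G n k) over all triples (n, m, k) equals the maximum over n of f(h⁽ⁿ⁾, g⁽ⁿ⁾), where h⁽ⁿ⁾ = max_m H n m and g⁽ⁿ⁾ = max_k G n k. In other words, the subset-based joint antenna selection over row maxima achieves the same maximal secondary SNR as an exhaustive search over all antenna triples. -/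
/-!
Above the threshold `γ / ρ` one has `f h g = g * (ρ - γ / min h g) / (γ + 1)`, increasing in both
arguments; below it `f = 0`, and `f ≥ 0` everywhere. Hence `f` is monotone in each argument, so it
commutes with maxima: for fixed `n` the maximum over the pairs `(m, k)` is `f h⁽ⁿ⁾ g⁽ⁿ⁾`.
-/

namespace Finset

variable {ι κ α β γ : Type*} [LinearOrder α] [LinearOrder β] [LinearOrder γ]

theorem sup'_sup'_map_of_monotone {s : Finset ι} {t : Finset κ} (hs : s.Nonempty)
    (ht : t.Nonempty) (u : ι → α) (v : κ → β) {φ : α → β → γ}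
    (hφ : ∀ b, Monotone (φ · b)) (hφ' : ∀ a, Monotone (φ a)) :
    s.sup' hs (fun i => t.sup' ht fun j => φ (u i) (v j)) = φ (s.sup' hs u) (t.sup' ht v) := by
  rw [apply_sup'_eq_sup'_comp hs (φ · _) fun _ _ => (hφ _).map_max]
  refine sup'_congr _ rfl fun i _ => ?_
  exact (apply_sup'_eq_sup'_comp ht (φ (u i)) fun _ _ => (hφ' _).map_max).symm

end Finset

noncomputable def secondarySNR (ρ γ h g : ℝ) : ℝ :=
  if γ / ρ < min h g then g * (min h g * ρ - γ) / ((γ + 1) * min h g) else 0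

section secondarySNR

variable {ρ γ : ℝ}

theorem secondarySNR_eq_of_lt {h g : ℝ} (hγ : 0 ≤ γ) (hρ : 0 < ρ) (hthr : γ / ρ < min h g) :
    secondarySNR ρ γ h g = g * (ρ - γ / min h g) / (γ + 1) := by
  have hmin : 0 < min h g := (div_nonneg hγ hρ.le).trans_lt hthr
  rw [secondarySNR, if_pos hthr]
  field_simp

theorem sub_div_pos_of_div_lt {t : ℝ} (hγ : 0 ≤ γ) (hρ : 0 < ρ) (ht : γ / ρ < t) :
    0 < ρ - γ / t :=
  sub_pos.mpr <| (div_lt_comm₀ hρ ((div_nonneg hγ hρ.le).trans_lt ht)).mp ht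

theorem secondarySNR_nonneg (hγ : 0 ≤ γ) (hρ : 0 < ρ) (h g : ℝ) : 0 ≤ secondarySNR ρ γ h g := by
  by_cases hthr : γ / ρ < min h g
  · have : 0 < g := ((div_nonneg hγ hρ.le).trans_lt hthr).trans_le (min_le_right h g)
    have := sub_div_pos_of_div_lt hγ hρ hthr
    rw [secondarySNR_eq_of_lt hγ hρ hthr]
    positivity
  · simp [secondarySNR, hthr]

theorem secondarySNR_mono (hγ : 0 ≤ γ) (hρ : 0 < ρ) {h h' g g' : ℝ} (hh : h ≤ h') (hg : g ≤ g') :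
    secondarySNR ρ γ h g ≤ secondarySNR ρ γ h' g' := by
  by_cases hthr : γ / ρ < min h g
  · have hmin_le : min h g ≤ min h' g' := min_le_min hh hg
    have hmin : 0 < min h g := (div_nonneg hγ hρ.le).trans_lt hthr
    have : 0 ≤ g' := (hmin.trans_le (min_le_right h g)).le.trans hg
    have := (sub_div_pos_of_div_lt hγ hρ hthr).le
    rw [secondarySNR_eq_of_lt hγ hρ hthr, secondarySNR_eq_of_lt hγ hρ (hthr.trans_le hmin_le)]
    gcongr
  · simpa [secondarySNR, hthr] using secondarySNR_nonneg hγ hρ h' g'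

end secondarySNR

theorem stmt4_general (ρ γ : ℝ) (hρ : 0 < ρ) (hγ : 0 < γ)
    (f : ℝ → ℝ → ℝ)
    (hf : ∀ h g : ℝ, f h g =
      if γ / ρ < min h g then g * (min h g * ρ - γ) / ((γ + 1) * min h g) else 0)
    (N M K : ℕ) (hN : 0 < N) (hM : 0 < M) (hK : 0 < K)
    (H : Fin N → Fin M → ℝ) (G : Fin N → Fin K → ℝ) :
    Finset.univ.sup' ⟨(⟨0, hN⟩, ⟨0, hM⟩, ⟨0, hK⟩), Finset.mem_univ _⟩
        (fun p : Fin N × Fin M × Fin K => f (H p.1 p.2.1) (G p.1 p.2.2)) =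
      Finset.univ.sup' ⟨⟨0, hN⟩, Finset.mem_univ _⟩
        (fun n : Fin N =>
          f (Finset.univ.sup' ⟨⟨0, hM⟩, Finset.mem_univ _⟩ (H n))
            (Finset.univ.sup' ⟨⟨0, hK⟩, Finset.mem_univ _⟩ (G n))) := by
  obtain rfl : f = secondarySNR ρ γ := funext₂ hf
  have hmono_left (b : ℝ) : Monotone (secondarySNR ρ γ · b) := fun _ _ hh =>
    secondarySNR_mono hγ.le hρ hh le_rfl
  have hmono_right (a : ℝ) : Monotone (secondarySNR ρ γ a) := fun _ _ hg =>
    secondarySNR_mono hγ.le hρ le_rfl hg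
  have hsplit (F : Fin N → Fin M → Fin K → ℝ) :
      Finset.univ.sup' ⟨(⟨0, hN⟩, ⟨0, hM⟩, ⟨0, hK⟩), Finset.mem_univ _⟩
          (fun p : Fin N × Fin M × Fin K => F p.1 p.2.1 p.2.2) =
        Finset.univ.sup' ⟨⟨0, hN⟩, Finset.mem_univ _⟩ fun n =>
          Finset.univ.sup' ⟨⟨0, hM⟩, Finset.mem_univ _⟩ fun m =>
            Finset.univ.sup' ⟨⟨0, hK⟩, Finset.mem_univ _⟩ fun k => F n m k :=
    (Finset.sup'_product_left (s := Finset.univ) (t := Finset.univ) _ _).trans <|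
      Finset.sup'_congr _ rfl fun _ _ =>
        Finset.sup'_product_left (s := Finset.univ) (t := Finset.univ) _ _
  exact (hsplit _).trans <| Finset.sup'_congr _ rfl fun n _ =>
    Finset.sup'_sup'_map_of_monotone _ _ (H n) (G n) hmono_left hmono_right

/-- For `ρ > 0`, `γ > 0` and the achievable secondary SNR `f`,
given positive channel gains `H : Fin N → Fin M → ℝ` and `G : Fin N → Fin K → ℝ`,
the maximum of `f (H n m) (G n k)` over all triples `(n, m, k)` equals the maximum
over `n` of `f h⁽ⁿ⁾ g⁽ⁿ⁾` where `h⁽ⁿ⁾ = max_m H n m` and `g⁽ⁿ⁾ = max_k G n k`: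
the subset-based joint antenna selection achieves the same maximal secondary SNR
as exhaustive search. -/
theorem stmt4 (ρ γ : ℝ) (hρ : 0 < ρ) (hγ : 0 < γ)
    (f : ℝ → ℝ → ℝ)
    (hf : ∀ h g : ℝ, f h g =
      if γ / ρ < min h g then g * (min h g * ρ - γ) / ((γ + 1) * min h g) else 0)
    (N M K : ℕ) (hN : 0 < N) (hM : 0 < M) (hK : 0 < K)
    (H : Fin N → Fin M → ℝ) (G : Fin N → Fin K → ℝ)
    (hH : ∀ n m, 0 < H n m) (hG : ∀ n k, 0 < G n k) :
    Finset.univ.sup' ⟨(⟨0, hN⟩, ⟨0, hM⟩, ⟨0, hK⟩), Finset.mem_univ _⟩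
        (fun p : Fin N × Fin M × Fin K => f (H p.1 p.2.1) (G p.1 p.2.2)) =
      Finset.univ.sup' ⟨⟨0, hN⟩, Finset.mem_univ _⟩
        (fun n : Fin N =>
          f (Finset.univ.sup' ⟨⟨0, hM⟩, Finset.mem_univ _⟩ (H n))
            (Finset.univ.sup' ⟨⟨0, hK⟩, Finset.mem_univ _⟩ (G n))) :=
  stmt4_general ρ γ hρ hγ f hf N M K hN hM hK H G
end

section
/- Let N, M, K be positive integers, let H : Fin N → Fin M → ℝ and G : Fin N → Fin K → ℝ take positive values, let ρ > 0, γ > 0 and let γ_s > 0 be the secondary detection threshold. If some triple (n, m, k) satisfies min(H n m, G n k) > γ/ρ and f(H n m, G n k) ≥ γ_s, then there exists n' with min(h⁽ⁿ'⁾, g⁽ⁿ'⁾) > γ/ρ and f(h⁽ⁿ'⁾, g⁽ⁿ'⁾) ≥ γ_s, where h⁽ⁿ⁾ = max_m H n m and g⁽ⁿ⁾ = max_k G n k. Consequently, whenever the subset-based joint antenna selection is in outage, every possible joint antenna selection is in outage, so no joint antenna-selection strategy achieves a lower outage probability than the subset-based joint antenna selection. -/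
lemma snr_formula_le_snr_formula {ρ γ g g' m m' : ℝ} (hρ : 0 < ρ) (hγ : 0 ≤ γ)
    (hm : γ / ρ < m) (hmm' : m ≤ m') (hg : 0 ≤ g) (hgg' : g ≤ g') :
    g * (m * ρ - γ) / ((γ + 1) * m) ≤ g' * (m' * ρ - γ) / ((γ + 1) * m') := by
  have hm0 : 0 < m := (div_nonneg hγ hρ.le).trans_lt hm
  have hmρ : γ / m < ρ := by
    rw [div_lt_iff₀ hm0]; rw [div_lt_iff₀ hρ] at hm; linarith
  have hrewrite : ∀ {x g : ℝ}, 0 < x →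
      g * (x * ρ - γ) / ((γ + 1) * x) = g * (ρ - γ / x) / (γ + 1) :=
    fun hx => by field_simp
  rw [hrewrite hm0, hrewrite (hm0.trans_le hmm')]
  have hγm' : γ / m' ≤ γ / m := div_le_div_of_nonneg_left hγ hm0 hmm'
  gcongr
  linarith

lemma secondarySNR_le_secondarySNR {ρ γ h g h' g' : ℝ} (hρ : 0 < ρ) (hγ : 0 ≤ γ)
    (hmin : γ / ρ < min h g) (hh' : h ≤ h') (hg' : g ≤ g') :
    secondarySNR ρ γ h g ≤ secondarySNR ρ γ h' g' := by
  have hmin' : min h g ≤ min h' g' := min_le_min hh' hg'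
  rw [secondarySNR, secondarySNR, if_pos hmin, if_pos (hmin.trans_le hmin')]
  exact snr_formula_le_snr_formula hρ hγ hmin hmin'
    ((div_nonneg hγ hρ.le).trans (hmin.le.trans (min_le_right h g))) hg'

theorem stmt6_general (ρ γ γs : ℝ) (hρ : 0 < ρ) (hγ : 0 < γ)
    (f : ℝ → ℝ → ℝ)
    (hf : ∀ h g : ℝ, f h g =
      if γ / ρ < min h g then g * (min h g * ρ - γ) / ((γ + 1) * min h g) else 0)
    (N M K : ℕ) (hM : 0 < M) (hK : 0 < K)
    (H : Fin N → Fin M → ℝ) (G : Fin N → Fin K → ℝ) :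
    ((∃ (n : Fin N) (m : Fin M) (k : Fin K),
        min (H n m) (G n k) > γ / ρ ∧ f (H n m) (G n k) ≥ γs) →
      (∃ n' : Fin N,
        min (Finset.univ.sup' ⟨⟨0, hM⟩, Finset.mem_univ _⟩ (H n'))
            (Finset.univ.sup' ⟨⟨0, hK⟩, Finset.mem_univ _⟩ (G n')) > γ / ρ ∧
        f (Finset.univ.sup' ⟨⟨0, hM⟩, Finset.mem_univ _⟩ (H n'))
            (Finset.univ.sup' ⟨⟨0, hK⟩, Finset.mem_univ _⟩ (G n')) ≥ γs)) ∧
    ((¬ ∃ n' : Fin N,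
        min (Finset.univ.sup' ⟨⟨0, hM⟩, Finset.mem_univ _⟩ (H n'))
            (Finset.univ.sup' ⟨⟨0, hK⟩, Finset.mem_univ _⟩ (G n')) > γ / ρ ∧
        f (Finset.univ.sup' ⟨⟨0, hM⟩, Finset.mem_univ _⟩ (H n'))
            (Finset.univ.sup' ⟨⟨0, hK⟩, Finset.mem_univ _⟩ (G n')) ≥ γs) →
      ∀ (n : Fin N) (m : Fin M) (k : Fin K),
        min (H n m) (G n k) ≤ γ / ρ ∨ f (H n m) (G n k) < γs) := by
  obtain rfl : f = secondarySNR ρ γ := funext₂ hf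
  have subset_selection : (∃ (n : Fin N) (m : Fin M) (k : Fin K),
      min (H n m) (G n k) > γ / ρ ∧ secondarySNR ρ γ (H n m) (G n k) ≥ γs) →
      ∃ n' : Fin N,
        min (Finset.univ.sup' ⟨⟨0, hM⟩, Finset.mem_univ _⟩ (H n'))
            (Finset.univ.sup' ⟨⟨0, hK⟩, Finset.mem_univ _⟩ (G n')) > γ / ρ ∧
        secondarySNR ρ γ (Finset.univ.sup' ⟨⟨0, hM⟩, Finset.mem_univ _⟩ (H n'))
            (Finset.univ.sup' ⟨⟨0, hK⟩, Finset.mem_univ _⟩ (G n')) ≥ γs := by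
    rintro ⟨n, m, k, hmin, hsnr⟩
    have hHn := Finset.le_sup' (H n) (Finset.mem_univ m)
    have hGn := Finset.le_sup' (G n) (Finset.mem_univ k)
    exact ⟨n, hmin.trans_le (min_le_min hHn hGn),
      hsnr.trans (secondarySNR_le_secondarySNR hρ hγ.le hmin hHn hGn)⟩
  refine ⟨subset_selection, fun hsubset_outage n m k => ?_⟩
  by_contra! hno_outage
  exact hsubset_outage (subset_selection ⟨n, m, k, hno_outage⟩)

/-- With the achievable secondary SNR `f`, positive channel gains,
`ρ > 0`, primary threshold `γ > 0` and secondary threshold `γs > 0`: if some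
triple `(n, m, k)` satisfies `min (H n m) (G n k) > γ/ρ` and `f (H n m) (G n k) ≥ γs`,
then some `n'` satisfies `min h⁽ⁿ'⁾ g⁽ⁿ'⁾ > γ/ρ` and `f h⁽ⁿ'⁾ g⁽ⁿ'⁾ ≥ γs`
(where `h⁽ⁿ⁾ = max_m H n m`, `g⁽ⁿ⁾ = max_k G n k`).  Consequently, whenever the
subset-based joint antenna selection is in outage, every joint antenna selection
`(n, m, k)` is in outage. -/
theorem stmt6 (ρ γ γs : ℝ) (hρ : 0 < ρ) (hγ : 0 < γ) (hγs : 0 < γs)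
    (f : ℝ → ℝ → ℝ)
    (hf : ∀ h g : ℝ, f h g =
      if γ / ρ < min h g then g * (min h g * ρ - γ) / ((γ + 1) * min h g) else 0)
    (N M K : ℕ) (hN : 0 < N) (hM : 0 < M) (hK : 0 < K)
    (H : Fin N → Fin M → ℝ) (G : Fin N → Fin K → ℝ)
    (hH : ∀ n m, 0 < H n m) (hG : ∀ n k, 0 < G n k) :
    ((∃ (n : Fin N) (m : Fin M) (k : Fin K),
        min (H n m) (G n k) > γ / ρ ∧ f (H n m) (G n k) ≥ γs) →
      (∃ n' : Fin N,
        min (Finset.univ.sup' ⟨⟨0, hM⟩, Finset.mem_univ _⟩ (H n'))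
            (Finset.univ.sup' ⟨⟨0, hK⟩, Finset.mem_univ _⟩ (G n')) > γ / ρ ∧
        f (Finset.univ.sup' ⟨⟨0, hM⟩, Finset.mem_univ _⟩ (H n'))
            (Finset.univ.sup' ⟨⟨0, hK⟩, Finset.mem_univ _⟩ (G n')) ≥ γs)) ∧
    ((¬ ∃ n' : Fin N,
        min (Finset.univ.sup' ⟨⟨0, hM⟩, Finset.mem_univ _⟩ (H n'))
            (Finset.univ.sup' ⟨⟨0, hK⟩, Finset.mem_univ _⟩ (G n')) > γ / ρ ∧
        f (Finset.univ.sup' ⟨⟨0, hM⟩, Finset.mem_univ _⟩ (H n'))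
            (Finset.univ.sup' ⟨⟨0, hK⟩, Finset.mem_univ _⟩ (G n')) ≥ γs) →
      ∀ (n : Fin N) (m : Fin M) (k : Fin K),
        min (H n m) (G n k) ≤ γ / ρ ∨ f (H n m) (G n k) < γs) :=
  stmt6_general ρ γ γs hρ hγ f hf N M K hM hK H G
end

section
/- If H and G are independent, then for all real c₁ ≥ 0 and c₂ > 0, P(c₁ < G ≤ c₁ + c₂ and H ≥ G) = Σ_{m=1}^{M} Σ_{k=1}^{K} (−1)^{m+k} · C(M, m) · C(K, k) · (k·Ω_g / (m·Ω_h + k·Ω_g)) · e^{−(m·Ω_h + k·Ω_g)·c₁} · (1 − e^{−(m·Ω_h + k·Ω_g)·c₂}), where C(·,·) denotes the binomial coefficient. -/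
/-!
By independence, `P(c₁ < G ≤ c₁ + c₂, H ≥ G) = ∫_{(c₁, c₁ + c₂]} P(H ≥ g) dP_G(g)`.
The CDF `F_H` is continuous, so `P(H ≥ g) = 1 - F_H(g)`, and the law of `G` has density `F_G'`
on `(0, ∞)`. Expanding `1 - F_H = 1 - (1 - e^{-Ωh g})^M` and
`F_G' = K Ωg e^{-Ωg g} (1 - e^{-Ωg g})^(K-1)` binomially turns the integrand into a combination
of exponentials `e^{-(m Ωh + k Ωg) g}`, which are integrated termwise.
-/

open MeasureTheory ProbabilityTheory Real Set Filter Topology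


section Binomial

variable {R : Type*} [CommRing R]

theorem sum_range_neg_one_pow_mul_choose_mul_pow (n : ℕ) (u : R) :
    ∑ m ∈ Finset.range (n + 1), (-1) ^ m * n.choose m * u ^ m = (1 - u) ^ n := by
  rw [sub_eq_neg_add, add_pow]
  refine Finset.sum_congr rfl fun m _ => ?_
  rw [neg_pow, one_pow]
  ring

theorem Finset.sum_range_succ_eq_sum_Icc_add {β : Type*} [AddCommMonoid β] (f : ℕ → β)
    (n : ℕ) : ∑ m ∈ range (n + 1), f m = ∑ m ∈ Icc 1 n, f m + f 0 := by
  rw [Nat.range_succ_eq_Icc_zero, ← sum_Ioc_add_eq_sum_Icc n.zero_le,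
    ← Icc_add_one_left_eq_Ioc, zero_add]

theorem sum_Icc_neg_one_pow_mul_choose_mul_pow (n : ℕ) (u : R) :
    ∑ m ∈ Finset.Icc 1 n, (-1) ^ m * n.choose m * u ^ m = (1 - u) ^ n - 1 := by
  rw [← sum_range_neg_one_pow_mul_choose_mul_pow, Finset.sum_range_succ_eq_sum_Icc_add]
  simp

theorem sum_Icc_neg_one_pow_mul_choose_mul_mul_pow (n : ℕ) (u : R) :
    ∑ m ∈ Finset.Icc 1 n, (-1) ^ m * n.choose m * m * u ^ m = -(n * u * (1 - u) ^ (n - 1)) := by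
  rcases n with _ | n
  · simp
  have hterm (i : ℕ) :
      (-1) ^ (i + 1) * (n + 1).choose (i + 1) * ((i + 1 : ℕ) : R) * u ^ (i + 1) =
        -((n + 1 : ℕ) * u * ((-1) ^ i * n.choose i * u ^ i)) := by
    have := congrArg (Nat.cast (R := R)) (Nat.add_one_mul_choose_eq n i)
    push_cast at this ⊢
    linear_combination (-1) ^ (i + 1) * u ^ (i + 1) * this.symm
  have hsum := Finset.sum_range_succ_eq_sum_Icc_add
    (fun m => (-1) ^ m * (n + 1).choose m * (m : R) * u ^ m) (n + 1)
  rw [Nat.cast_zero, mul_zero, zero_mul, add_zero] at hsum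
  rw [← hsum, Finset.sum_range_succ', Finset.sum_congr rfl fun i _ => hterm i,
    Finset.sum_neg_distrib, ← Finset.mul_sum, sum_range_neg_one_pow_mul_choose_mul_pow]
  simp

end Binomial

theorem integral_Ioc_eq_sub_of_hasDerivAt {F f : ℝ → ℝ} {a b : ℝ} (hab : a ≤ b)
    (hF : ∀ x ∈ Icc a b, HasDerivAt F (f x) x) (hf : ContinuousOn f (Icc a b)) :
    ∫ x in Ioc a b, f x = F b - F a := by
  rw [← intervalIntegral.integral_of_le hab, intervalIntegral.integral_eq_sub_of_hasDerivAt
    (by rwa [uIcc_of_le hab]) (hf.intervalIntegrable_of_Icc hab)]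

theorem lintegral_Ioc_ofReal_eq_sub_of_hasDerivAt {F f : ℝ → ℝ} {a b : ℝ} (hab : a ≤ b)
    (hF : ∀ x ∈ Icc a b, HasDerivAt F (f x) x) (hf : ContinuousOn f (Icc a b))
    (hf0 : ∀ x ∈ Ioc a b, 0 ≤ f x) :
    ∫⁻ x in Ioc a b, ENNReal.ofReal (f x) = ENNReal.ofReal (F b - F a) := by
  rw [← ofReal_integral_eq_lintegral_ofReal (hf.integrableOn_Icc.mono_set Ioc_subset_Icc_self)
      (ae_restrict_of_forall_mem measurableSet_Ioc hf0),
    integral_Ioc_eq_sub_of_hasDerivAt hab hF hf]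

theorem toReal_lintegral_Ioc_ofReal_eq_sub_of_hasDerivAt {F f : ℝ → ℝ} {a b : ℝ}
    (hab : a ≤ b)
    (hF : ∀ x ∈ Icc a b, HasDerivAt F (f x) x) (hf : ContinuousOn f (Icc a b))
    (hf0 : ∀ x ∈ Ioc a b, 0 ≤ f x) :
    (∫⁻ x in Ioc a b, ENNReal.ofReal (f x)).toReal = F b - F a := by
  rw [lintegral_Ioc_ofReal_eq_sub_of_hasDerivAt hab hF hf hf0, ENNReal.toReal_ofReal
    (integral_Ioc_eq_sub_of_hasDerivAt hab hF hf ▸ setIntegral_nonneg measurableSet_Ioc hf0)]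

theorem measure_Ici_eq_ofReal_one_sub {ν : Measure ℝ} [IsProbabilityMeasure ν] {F : ℝ → ℝ}
    {y : ℝ} (hF : ContinuousAt F y) (hcdf : ∀ᶠ x in 𝓝 y, ν.real (Iic x) = F x) :
    ν (Ici y) = ENNReal.ofReal (1 - F y) := by
  have hcdfF : cdf ν =ᶠ[𝓝 y] F := hcdf.mono fun x hx => (cdf_eq_real ν x).trans hx
  have hcont : ContinuousAt (cdf ν) y := hF.congr_of_eventuallyEq hcdfF
  rw [← measure_cdf ν, StieltjesFunction.measure_Ici _ (tendsto_cdf_atTop ν),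
    hcont.continuousWithinAt.leftLim_eq, hcdfF.eq_of_nhds]

theorem eq_withDensity_of_hasDerivAt {ν : Measure ℝ} [IsFiniteMeasure ν] {F f : ℝ → ℝ}
    (hF : ∀ x, 0 ≤ x → HasDerivAt F (f x) x) (hf : ContinuousOn f (Ici 0))
    (hf0 : ∀ x, 0 < x → 0 ≤ f x) (hcdf : ∀ x, 0 ≤ x → ν (Iic x) = ENNReal.ofReal (F x - F 0)) :
    ν = (volume.restrict (Ioi 0)).withDensity fun x => ENNReal.ofReal (f x) := by
  refine Measure.ext_of_Iic _ _ fun x => ?_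
  rw [withDensity_apply _ measurableSet_Iic, Measure.restrict_restrict measurableSet_Iic,
    Iic_inter_Ioi]
  rcases lt_or_ge x 0 with hx | hx
  · rw [Ioc_eq_empty hx.not_gt, Measure.restrict_empty, lintegral_zero_measure]
    refine measure_mono_null (Iic_subset_Iic.2 hx.le) ?_
    rw [hcdf 0 le_rfl, sub_self, ENNReal.ofReal_zero]
  · rw [hcdf x hx, lintegral_Ioc_ofReal_eq_sub_of_hasDerivAt hx (fun t ht => hF t ht.1)
      (hf.mono Icc_subset_Ici_self) fun t ht => hf0 t ht.1]

theorem ProbabilityTheory.IndepFun.measure_mem_and_le_eq_lintegral {Ω : Type*}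
    [MeasurableSpace Ω] {μ : Measure Ω} [IsFiniteMeasure μ] {X Y : Ω → ℝ} (hXY : IndepFun X Y μ)
    (hX : Measurable X) (hY : Measurable Y) {A : Set ℝ} (hA : MeasurableSet A) :
    μ {ω | Y ω ∈ A ∧ Y ω ≤ X ω} = ∫⁻ y in A, μ.map X (Ici y) ∂μ.map Y := by
  have hS : MeasurableSet {p : ℝ × ℝ | p.2 ∈ A ∧ p.2 ≤ p.1} :=
    (measurable_snd hA).inter (measurableSet_le measurable_snd measurable_fst)
  have hmap := (indepFun_iff_map_prod_eq_prod_map_map hX.aemeasurable hY.aemeasurable).1 hXY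
  rw [← lintegral_indicator hA]
  calc μ {ω | Y ω ∈ A ∧ Y ω ≤ X ω}
      = μ.map (fun ω => (X ω, Y ω)) {p : ℝ × ℝ | p.2 ∈ A ∧ p.2 ≤ p.1} :=
        (Measure.map_apply (hX.prodMk hY) hS).symm
    _ = _ := by
        rw [hmap, Measure.prod_apply_symm hS]
        congr with y
        by_cases hy : y ∈ A <;> simp [hy, Ici_def]

theorem ProbabilityTheory.IndepFun.measure_mem_Ioc_and_le_eq_lintegral {Ω : Type*}
    [MeasurableSpace Ω] {μ : Measure Ω} [IsFiniteMeasure μ] {X Y : Ω → ℝ} (hXY : IndepFun X Y μ)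
    (hX : Measurable X) (hY : Measurable Y) {f S : ℝ → ℝ}
    (hYlaw : μ.map Y = (volume.restrict (Ioi 0)).withDensity fun y => ENNReal.ofReal (f y))
    (hf : Measurable f) (hf0 : ∀ y, 0 < y → 0 ≤ f y)
    (hXtail : ∀ y, 0 < y → μ.map X (Ici y) = ENNReal.ofReal (S y)) {a : ℝ} (ha : 0 ≤ a)
    (b : ℝ) :
    μ {ω | Y ω ∈ Ioc a b ∧ Y ω ≤ X ω} = ∫⁻ y in Ioc a b, ENNReal.ofReal (f y * S y) := by
  have hXtail_meas : Measurable fun y => μ.map X (Ici y) :=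
    Antitone.measurable fun _ _ h => measure_mono (Ici_subset_Ici.2 h)
  rw [hXY.measure_mem_and_le_eq_lintegral hX hY measurableSet_Ioc, hYlaw,
    restrict_withDensity measurableSet_Ioc,
    lintegral_withDensity_eq_lintegral_mul _ hf.ennreal_ofReal hXtail_meas,
    Measure.restrict_restrict measurableSet_Ioc,
    inter_eq_left.2 (Ioc_subset_Ioi_self.trans (Ioi_subset_Ioi ha))]
  refine setLIntegral_congr_fun measurableSet_Ioc fun y hy => ?_
  have hy0 : 0 < y := ha.trans_lt hy.1
  rw [Pi.mul_apply, hXtail y hy0, ENNReal.ofReal_mul (hf0 y hy0)]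

/-- The CDF of the maximum of `n` i.i.d. exponential variables of rate `r`, but only on `[0, ∞)`:
for `x < 0` it is the smooth continuation, not `0`. -/
noncomputable def expMaxCDF (r : ℝ) (n : ℕ) (x : ℝ) : ℝ := (1 - exp (-(r * x))) ^ n

noncomputable def expMaxPDF (r : ℝ) (n : ℕ) (x : ℝ) : ℝ :=
  n * r * exp (-(r * x)) * (1 - exp (-(r * x))) ^ (n - 1)

section ExpMax

variable (r : ℝ) (n : ℕ)

theorem continuous_expMaxCDF : Continuous (expMaxCDF r n) := by
  unfold expMaxCDF; fun_prop

theorem continuous_expMaxPDF : Continuous (expMaxPDF r n) := by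
  unfold expMaxPDF; fun_prop

theorem hasDerivAt_expMaxCDF (x : ℝ) : HasDerivAt (expMaxCDF r n) (expMaxPDF r n x) x := by
  refine ((((hasDerivAt_id x).const_mul r).fun_neg.exp.const_sub 1).pow n).congr_deriv ?_
  simp only [expMaxPDF, id]
  ring

variable {r n}

theorem expMaxCDF_zero (hn : n ≠ 0) : expMaxCDF r n 0 = 0 := by
  simp [expMaxCDF, hn]

theorem one_sub_exp_neg_mul_mem_Icc {x : ℝ} (hr : 0 ≤ r) (hx : 0 ≤ x) :
    1 - exp (-(r * x)) ∈ Icc 0 1 := by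
  have : exp (-(r * x)) ≤ 1 := exp_le_one_iff.2 (neg_nonpos.2 (mul_nonneg hr hx))
  constructor <;> linarith [exp_pos (-(r * x))]

theorem expMaxCDF_le_one {x : ℝ} (hr : 0 ≤ r) (hx : 0 ≤ x) : expMaxCDF r n x ≤ 1 :=
  pow_le_one₀ (one_sub_exp_neg_mul_mem_Icc hr hx).1 (one_sub_exp_neg_mul_mem_Icc hr hx).2

theorem expMaxPDF_nonneg {x : ℝ} (hr : 0 ≤ r) (hx : 0 ≤ x) : 0 ≤ expMaxPDF r n x := by
  have := (one_sub_exp_neg_mul_mem_Icc hr hx).1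
  unfold expMaxPDF; positivity

theorem measure_Ici_of_expMaxCDF {ν : Measure ℝ} [IsProbabilityMeasure ν]
    (hcdf : ∀ x, 0 ≤ x → ν.real (Iic x) = expMaxCDF r n x) {y : ℝ} (hy : 0 < y) :
    ν (Ici y) = ENNReal.ofReal (1 - expMaxCDF r n y) :=
  measure_Ici_eq_ofReal_one_sub (continuous_expMaxCDF r n).continuousAt <|
    eventually_of_mem (Ioi_mem_nhds hy) fun x hx => hcdf x (le_of_lt hx)

theorem eq_withDensity_expMaxPDF {ν : Measure ℝ} [IsFiniteMeasure ν] (hr : 0 ≤ r) (hn : n ≠ 0)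
    (hcdf : ∀ x, 0 ≤ x → ν.real (Iic x) = expMaxCDF r n x) :
    ν = (volume.restrict (Ioi 0)).withDensity fun x => ENNReal.ofReal (expMaxPDF r n x) :=
  eq_withDensity_of_hasDerivAt (fun x _ => hasDerivAt_expMaxCDF r n x)
    (continuous_expMaxPDF r n).continuousOn (fun x hx => expMaxPDF_nonneg hr hx.le)
    fun x hx => by rw [expMaxCDF_zero hn, sub_zero, ← hcdf x hx, ofReal_measureReal]

end ExpMax

/-- Closed form of `P(G > x, H ≥ G)` for `x ≥ 0`. -/
noncomputable def exceedProb (Ωh Ωg : ℝ) (M K : ℕ) (x : ℝ) : ℝ :=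
  ∑ m ∈ Finset.Icc 1 M, ∑ k ∈ Finset.Icc 1 K,
    (-1 : ℝ) ^ (m + k) * M.choose m * K.choose k * (k * Ωg / (m * Ωh + k * Ωg)) *
      exp (-((m * Ωh + k * Ωg) * x))

theorem hasDerivAt_exceedProb {Ωh Ωg : ℝ} (hΩh : 0 ≤ Ωh) (hΩg : 0 < Ωg) (M K : ℕ) (x : ℝ) :
    HasDerivAt (exceedProb Ωh Ωg M K) (-(expMaxPDF Ωg K x * (1 - expMaxCDF Ωh M x))) x := by
  set u := exp (-(Ωh * x))
  set v := exp (-(Ωg * x))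
  have hterm : ∀ m ∈ Finset.Icc 1 M, ∀ k ∈ Finset.Icc 1 K,
      HasDerivAt (fun x => (-1 : ℝ) ^ (m + k) * M.choose m * K.choose k *
        (k * Ωg / (m * Ωh + k * Ωg)) * exp (-((m * Ωh + k * Ωg) * x)))
        (-(((-1) ^ m * M.choose m * u ^ m) * ((-1) ^ k * K.choose k * k * v ^ k * Ωg))) x := by
    intro m _ k hk
    have hs : (m * Ωh + k * Ωg : ℝ) ≠ 0 := by
      have : (1 : ℝ) ≤ k := by exact_mod_cast (Finset.mem_Icc.1 hk).1
      positivity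
    have hexp : exp (-((m * Ωh + k * Ωg) * x)) = u ^ m * v ^ k := by
      rw [← exp_nat_mul, ← exp_nat_mul, ← exp_add]; ring_nf
    refine (((hasDerivAt_id x).const_mul (m * Ωh + k * Ωg : ℝ)).fun_neg.exp.const_mul
      ((-1 : ℝ) ^ (m + k) * M.choose m * K.choose k * (k * Ωg / (m * Ωh + k * Ωg))))
      |>.congr_deriv ?_
    simp only [id, hexp]
    field_simp
    ring
  refine (HasDerivAt.fun_sum fun m hm => HasDerivAt.fun_sum fun k hk => hterm m hm k hk)
    |>.congr_deriv ?_
  rw [Finset.sum_congr rfl fun m _ => Finset.sum_neg_distrib _, Finset.sum_neg_distrib,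
    ← Finset.sum_mul_sum, ← Finset.sum_mul, sum_Icc_neg_one_pow_mul_choose_mul_pow,
    sum_Icc_neg_one_pow_mul_choose_mul_mul_pow]
  simp only [expMaxPDF, expMaxCDF]
  ring

theorem exceedProb_sub_exceedProb_add (Ωh Ωg : ℝ) (M K : ℕ) (c₁ c₂ : ℝ) :
    exceedProb Ωh Ωg M K c₁ - exceedProb Ωh Ωg M K (c₁ + c₂) =
      ∑ m ∈ Finset.Icc 1 M, ∑ k ∈ Finset.Icc 1 K,
        (-1 : ℝ) ^ (m + k) * (M.choose m) * (K.choose k) *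
          ((k : ℝ) * Ωg / ((m : ℝ) * Ωh + (k : ℝ) * Ωg)) *
          exp (-(((m : ℝ) * Ωh + (k : ℝ) * Ωg) * c₁)) *
          (1 - exp (-(((m : ℝ) * Ωh + (k : ℝ) * Ωg) * c₂))) := by
  simp only [exceedProb, ← Finset.sum_sub_distrib]
  refine Finset.sum_congr rfl fun m _ => Finset.sum_congr rfl fun k _ => ?_
  rw [mul_add, neg_add, exp_add]
  ring

theorem stmt8_general {Ω : Type*} [MeasurableSpace Ω] (μ : Measure Ω) [IsProbabilityMeasure μ]
    (H G : Ω → ℝ) (hHm : Measurable H) (hGm : Measurable G)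
    (M K : ℕ) (hK : 0 < K)
    (Ωh Ωg : ℝ) (hΩh : 0 < Ωh) (hΩg : 0 < Ωg)
    (hind : IndepFun H G μ)
    (hHcdf : ∀ x : ℝ, 0 ≤ x → (μ {ω | H ω ≤ x}).toReal = (1 - exp (-(Ωh * x))) ^ M)
    (hGcdf : ∀ x : ℝ, 0 ≤ x → (μ {ω | G ω ≤ x}).toReal = (1 - exp (-(Ωg * x))) ^ K) :
    ∀ c₁ c₂ : ℝ, 0 ≤ c₁ → 0 < c₂ →
      (μ {ω | (c₁ < G ω ∧ G ω ≤ c₁ + c₂) ∧ H ω ≥ G ω}).toReal =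
        ∑ m ∈ Finset.Icc 1 M, ∑ k ∈ Finset.Icc 1 K,
          (-1 : ℝ) ^ (m + k) * (M.choose m) * (K.choose k) *
            ((k : ℝ) * Ωg / ((m : ℝ) * Ωh + (k : ℝ) * Ωg)) *
            exp (-(((m : ℝ) * Ωh + (k : ℝ) * Ωg) * c₁)) *
            (1 - exp (-(((m : ℝ) * Ωh + (k : ℝ) * Ωg) * c₂))) := by
  intro c₁ c₂ hc₁ hc₂
  have hlawH (x : ℝ) (hx : 0 ≤ x) : (μ.map H).real (Iic x) = expMaxCDF Ωh M x := by
    rw [map_measureReal_apply hHm measurableSet_Iic]; exact hHcdf x hx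
  have hlawG (x : ℝ) (hx : 0 ≤ x) : (μ.map G).real (Iic x) = expMaxCDF Ωg K x := by
    rw [map_measureReal_apply hGm measurableSet_Iic]; exact hGcdf x hx
  have := Measure.isProbabilityMeasure_map (μ := μ) hHm.aemeasurable
  have hw : Continuous fun y => expMaxPDF Ωg K y * (1 - expMaxCDF Ωh M y) :=
    (continuous_expMaxPDF Ωg K).mul (continuous_const.sub (continuous_expMaxCDF Ωh M))
  have hw0 (y : ℝ) (hy : y ∈ Ioc c₁ (c₁ + c₂)) :
      0 ≤ expMaxPDF Ωg K y * (1 - expMaxCDF Ωh M y) :=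
    have hy0 : 0 ≤ y := hc₁.trans hy.1.le
    mul_nonneg (expMaxPDF_nonneg hΩg.le hy0) (sub_nonneg.2 (expMaxCDF_le_one hΩh.le hy0))
  change (μ {ω | G ω ∈ Ioc c₁ (c₁ + c₂) ∧ G ω ≤ H ω}).toReal = _
  rw [hind.measure_mem_Ioc_and_le_eq_lintegral hHm hGm
      (eq_withDensity_expMaxPDF hΩg.le hK.ne' hlawG) (continuous_expMaxPDF Ωg K).measurable
      (fun y hy => expMaxPDF_nonneg hΩg.le hy.le) (fun y hy => measure_Ici_of_expMaxCDF hlawH hy)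
      hc₁ _,
    toReal_lintegral_Ioc_ofReal_eq_sub_of_hasDerivAt (by linarith)
      (fun x _ => (hasDerivAt_exceedProb hΩh.le hΩg M K x).fun_neg.congr_deriv (neg_neg _))
      hw.continuousOn hw0, neg_sub_neg, exceedProb_sub_exceedProb_add]

/-- If `H` and `G` are independent with CDFs `(1 - e^{-Ωh x})^M` and
`(1 - e^{-Ωg x})^K` for `x ≥ 0` (and `0` for `x < 0`), then for `c₁ ≥ 0` and `c₂ > 0`,
`P(c₁ < G ≤ c₁ + c₂ ∧ H ≥ G)
  = Σ_{m=1}^{M} Σ_{k=1}^{K} (-1)^{m+k}·C(M,m)·C(K,k)·(k·Ωg/(m·Ωh + k·Ωg))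
      · e^{-(m·Ωh + k·Ωg)·c₁} · (1 - e^{-(m·Ωh + k·Ωg)·c₂})`. -/
theorem stmt8 {Ω : Type*} [MeasurableSpace Ω] (μ : Measure Ω) [IsProbabilityMeasure μ]
    (H G : Ω → ℝ) (hHm : Measurable H) (hGm : Measurable G)
    (M K : ℕ) (hM : 0 < M) (hK : 0 < K)
    (Ωh Ωg : ℝ) (hΩh : 0 < Ωh) (hΩg : 0 < Ωg)
    (hind : IndepFun H G μ)
    (hHcdf : ∀ x : ℝ, 0 ≤ x → (μ {ω | H ω ≤ x}).toReal = (1 - exp (-(Ωh * x))) ^ M)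
    (hHneg : ∀ x : ℝ, x < 0 → μ {ω | H ω ≤ x} = 0)
    (hGcdf : ∀ x : ℝ, 0 ≤ x → (μ {ω | G ω ≤ x}).toReal = (1 - exp (-(Ωg * x))) ^ K)
    (hGneg : ∀ x : ℝ, x < 0 → μ {ω | G ω ≤ x} = 0) :
    ∀ c₁ c₂ : ℝ, 0 ≤ c₁ → 0 < c₂ →
      (μ {ω | (c₁ < G ω ∧ G ω ≤ c₁ + c₂) ∧ H ω ≥ G ω}).toReal =
        ∑ m ∈ Finset.Icc 1 M, ∑ k ∈ Finset.Icc 1 K,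
          (-1 : ℝ) ^ (m + k) * (M.choose m) * (K.choose k) *
            ((k : ℝ) * Ωg / ((m : ℝ) * Ωh + (k : ℝ) * Ωg)) *
            exp (-(((m : ℝ) * Ωh + (k : ℝ) * Ωg) * c₁)) *
            (1 - exp (-(((m : ℝ) * Ωh + (k : ℝ) * Ωg) * c₂))) :=
  stmt8_general μ H G hHm hGm M K hK Ωh Ωg hΩh hΩg hind hHcdf hGcdf
end

section
/- If H and G are independent, then for all real 0 ≤ c₁ < c₂, P(c₁ < H < G < c₂) = Σ_{m=1}^{M} Σ_{k=1}^{K} (−1)^{m+k} · C(M, m) · C(K, k) · ( (m·Ω_h·e^{−(m·Ω_h + k·Ω_g)·c₁} + k·Ω_g·e^{−(m·Ω_h + k·Ω_g)·c₂}) / (m·Ω_h + k·Ω_g) − e^{−(m·Ω_h·c₁ + k·Ω_g·c₂)} ), where C(·,·) denotes the binomial coefficient. -/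
/-!
By independence the law of `(H, G)` is the product of the two laws, and the law of `H` has the
density `f_H = F_H'` on `[0, ∞)`, so the probability is `∫_{c₁}^{c₂} f_H(h) (F_G(c₂) - F_G(h)) dh`.
The binomial theorem writes `f_H` and `F_G` as finite sums of exponentials, and the formula is the
term-by-term integral.
-/

open MeasureTheory ProbabilityTheory Real Set Filter

theorem one_sub_pow_eq_one_add_sum {R : Type*} [CommRing R] (u : R) (n : ℕ) :
    (1 - u) ^ n = 1 + ∑ m ∈ Finset.Icc 1 n, (-1) ^ m * (n.choose m : R) * u ^ m := by
  rw [sub_eq_neg_add, add_pow, Nat.range_succ_eq_Icc_zero,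
    ← Finset.insert_Icc_add_one_left_eq_Icc n.zero_le, Finset.sum_insert (by simp)]
  refine congrArg₂ (· + ·) (by simp) (Finset.sum_congr rfl fun m _ ↦ ?_)
  rw [neg_pow]
  ring

theorem integral_exp_neg_mul {s : ℝ} (hs : s ≠ 0) (a b : ℝ) :
    ∫ x in a..b, exp (-(s * x)) = (exp (-(s * a)) - exp (-(s * b))) / s := by
  have hderiv (x : ℝ) : HasDerivAt (fun x ↦ -exp (-(s * x)) / s) (exp (-(s * x))) x :=
    (((hasDerivAt_id' x).const_mul s).fun_neg.exp.fun_neg.div_const s).congr_deriv (by field_simp)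
  rw [intervalIntegral.integral_eq_sub_of_hasDerivAt (fun x _ ↦ hderiv x)
    ((by fun_prop : Continuous fun x ↦ exp (-(s * x))).intervalIntegrable _ _)]
  ring

theorem integral_exp_mul_exp_sub_exp {l r : ℝ} (hl : l ≠ 0) (hlr : l + r ≠ 0) (c₁ c₂ : ℝ) :
    ∫ h in c₁..c₂, l * exp (-(l * h)) * (exp (-(r * c₂)) - exp (-(r * h))) =
      exp (-(l * c₁ + r * c₂)) -
        (l * exp (-((l + r) * c₁)) + r * exp (-((l + r) * c₂))) / (l + r) := by
  have hsplit (h : ℝ) : l * exp (-(l * h)) * (exp (-(r * c₂)) - exp (-(r * h))) =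
      (l * exp (-(r * c₂))) * exp (-(l * h)) - l * exp (-((l + r) * h)) := by
    rw [show -((l + r) * h) = -(l * h) + -(r * h) by ring, exp_add]
    ring
  simp_rw [hsplit]
  rw [intervalIntegral.integral_sub (Continuous.intervalIntegrable (by fun_prop) _ _)
      (Continuous.intervalIntegrable (by fun_prop) _ _),
    intervalIntegral.integral_const_mul, intervalIntegral.integral_const_mul,
    integral_exp_neg_mul hl, integral_exp_neg_mul hlr,
    show -(l * c₁ + r * c₂) = -(l * c₁) + -(r * c₂) by ring, exp_add,
    show -((l + r) * c₂) = -(l * c₂) + -(r * c₂) by ring, exp_add]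
  field_simp
  ring

noncomputable def densityOnIci (f : ℝ → ℝ) : Measure ℝ :=
  (volume.restrict (Ici 0)).withDensity fun x ↦ ENNReal.ofReal (f x)

instance (f : ℝ → ℝ) : SFinite (densityOnIci f) := by
  unfold densityOnIci; infer_instance

section DensityOnIci

variable {f F : ℝ → ℝ}

theorem densityOnIci_apply (f : ℝ → ℝ) {s : Set ℝ} (hs : MeasurableSet s) :
    densityOnIci f s = ∫⁻ x in s ∩ Ici 0, ENNReal.ofReal (f x) := by
  rw [densityOnIci, withDensity_apply _ hs, Measure.restrict_restrict hs]

theorem setLIntegral_Ioc_ofReal_eq_sub (hF : ∀ x, HasDerivAt F (f x) x) (hf : Continuous f)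
    {a b : ℝ} (hab : a ≤ b) (hf0 : ∀ x ∈ Ioc a b, 0 ≤ f x) :
    ∫⁻ x in Ioc a b, ENNReal.ofReal (f x) = ENNReal.ofReal (F b - F a) := by
  rw [← ofReal_integral_eq_lintegral_ofReal hf.integrableOn_Ioc
      ((ae_restrict_iff' measurableSet_Ioc).2 (Eventually.of_forall hf0)),
    ← intervalIntegral.integral_of_le hab,
    intervalIntegral.integral_eq_sub_of_hasDerivAt (fun x _ ↦ hF x) (hf.intervalIntegrable _ _)]

theorem densityOnIci_Iic_of_neg (f : ℝ → ℝ) {x : ℝ} (hx : x < 0) :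
    densityOnIci f (Iic x) = 0 := by
  rw [densityOnIci_apply f measurableSet_Iic, Iic_inter_Ici, Icc_eq_empty_of_lt hx,
    Measure.restrict_empty, lintegral_zero_measure]

theorem densityOnIci_Iic (hF : ∀ x, HasDerivAt F (f x) x) (hf : Continuous f)
    (hf0 : ∀ x, 0 ≤ x → 0 ≤ f x) {x : ℝ} (hx : 0 ≤ x) :
    densityOnIci f (Iic x) = ENNReal.ofReal (F x - F 0) := by
  rw [densityOnIci_apply f measurableSet_Iic, Iic_inter_Ici,
    setLIntegral_congr Ioc_ae_eq_Icc.symm,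
    setLIntegral_Ioc_ofReal_eq_sub hF hf hx fun t ht ↦ hf0 t ht.1.le]

theorem densityOnIci_Ioo (hF : ∀ x, HasDerivAt F (f x) x) (hf : Continuous f)
    (hf0 : ∀ x, 0 ≤ x → 0 ≤ f x) {a b : ℝ} (ha : 0 ≤ a) (hab : a ≤ b) :
    densityOnIci f (Ioo a b) = ENNReal.ofReal (F b - F a) := by
  rw [densityOnIci_apply f measurableSet_Ioo,
    inter_eq_left.2 fun t ht ↦ mem_Ici.2 (ha.trans ht.1.le), setLIntegral_congr Ioo_ae_eq_Ioc,
    setLIntegral_Ioc_ofReal_eq_sub hF hf hab fun t ht ↦ hf0 t (ha.trans ht.1.le)]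

theorem monotoneOn_Ici_of_hasDerivAt (hF : ∀ x, HasDerivAt F (f x) x)
    (hf0 : ∀ x, 0 ≤ x → 0 ≤ f x) : MonotoneOn F (Ici 0) :=
  monotoneOn_of_hasDerivWithinAt_nonneg (convex_Ici 0)
    (fun x _ ↦ (hF x).continuousAt.continuousWithinAt) (fun x _ ↦ (hF x).hasDerivWithinAt)
    fun x hx ↦ hf0 x (interior_subset hx)

theorem map_eq_densityOnIci {Ω : Type*} [MeasurableSpace Ω] (μ : Measure Ω) [IsFiniteMeasure μ]
    {X : Ω → ℝ} (hX : Measurable X) (hF : ∀ x, HasDerivAt F (f x) x) (hf : Continuous f)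
    (hf0 : ∀ x, 0 ≤ x → 0 ≤ f x) (hF0 : F 0 = 0)
    (hcdf : ∀ x, 0 ≤ x → (μ {ω | X ω ≤ x}).toReal = F x)
    (hneg : ∀ x, x < 0 → μ {ω | X ω ≤ x} = 0) :
    μ.map X = densityOnIci f := by
  refine Measure.ext_of_Iic _ _ fun x ↦ ?_
  rw [Measure.map_apply hX measurableSet_Iic]
  rcases lt_or_ge x 0 with hx | hx
  · rw [densityOnIci_Iic_of_neg f hx]
    exact hneg x hx
  · rw [densityOnIci_Iic hF hf hf0 hx, hF0, sub_zero, ← hcdf x hx,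
      ENNReal.ofReal_toReal (measure_ne_top _ _)]
    rfl

theorem prod_densityOnIci_lt_lt_lt {g G : ℝ → ℝ} (hf : Continuous f) (hf0 : ∀ x, 0 ≤ x → 0 ≤ f x)
    (hG : ∀ x, HasDerivAt G (g x) x) (hg : Continuous g) (hg0 : ∀ x, 0 ≤ x → 0 ≤ g x)
    {c₁ c₂ : ℝ} (hc₁ : 0 ≤ c₁) :
    (densityOnIci f).prod (densityOnIci g) {p | c₁ < p.1 ∧ p.1 < p.2 ∧ p.2 < c₂} =
      ∫⁻ h in Ioo c₁ c₂, ENNReal.ofReal (f h * (G c₂ - G h)) := by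
  set S := {p : ℝ × ℝ | c₁ < p.1 ∧ p.1 < p.2 ∧ p.2 < c₂}
  have hS : MeasurableSet S := by measurability
  have hslice (h : ℝ) : ENNReal.ofReal (f h) * densityOnIci g (Prod.mk h ⁻¹' S) =
      (Ioo c₁ c₂).indicator (fun h ↦ ENNReal.ofReal (f h * (G c₂ - G h))) h := by
    by_cases hh : h ∈ Ioo c₁ c₂
    · have h0 : 0 ≤ h := hc₁.trans hh.1.le
      have hS_h : Prod.mk h ⁻¹' S = Ioo h c₂ := by
        ext y
        simp [S, hh.1]
      rw [indicator_of_mem hh, ENNReal.ofReal_mul (hf0 h h0), hS_h,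
        densityOnIci_Ioo hG hg hg0 h0 hh.2.le]
    · have hS_h : Prod.mk h ⁻¹' S = ∅ :=
        eq_empty_of_forall_notMem fun y hy ↦ hh ⟨hy.1, hy.2.1.trans hy.2.2⟩
      rw [indicator_of_notMem hh, hS_h, measure_empty, mul_zero]
  rw [Measure.prod_apply hS, densityOnIci,
    lintegral_withDensity_eq_lintegral_mul _ (by fun_prop) (measurable_measure_prodMk_left hS)]
  simp only [Pi.mul_apply, hslice]
  rw [lintegral_indicator measurableSet_Ioo, Measure.restrict_restrict measurableSet_Ioo,
    inter_eq_left.2 fun t ht ↦ mem_Ici.2 (hc₁.trans ht.1.le)]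

theorem ProbabilityTheory.IndepFun.toReal_measure_lt_lt_lt {g G : ℝ → ℝ} {Ω : Type*}
    [MeasurableSpace Ω] {μ : Measure Ω} [IsFiniteMeasure μ] {X Y : Ω → ℝ} (hXY : IndepFun X Y μ)
    (hX : Measurable X) (hY : Measurable Y)
    (hμX : μ.map X = densityOnIci f) (hμY : μ.map Y = densityOnIci g)
    (hf : Continuous f) (hf0 : ∀ x, 0 ≤ x → 0 ≤ f x)
    (hG : ∀ x, HasDerivAt G (g x) x) (hg : Continuous g) (hg0 : ∀ x, 0 ≤ x → 0 ≤ g x)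
    {c₁ c₂ : ℝ} (hc₁ : 0 ≤ c₁) (hc : c₁ ≤ c₂) :
    (μ {ω | c₁ < X ω ∧ X ω < Y ω ∧ Y ω < c₂}).toReal = ∫ h in c₁..c₂, f h * (G c₂ - G h) := by
  have hS : MeasurableSet {p : ℝ × ℝ | c₁ < p.1 ∧ p.1 < p.2 ∧ p.2 < c₂} := by measurability
  have hnonneg : ∀ h ∈ Ioo c₁ c₂, 0 ≤ f h * (G c₂ - G h) := fun h hh ↦
    have h0 : 0 ≤ h := hc₁.trans hh.1.le
    mul_nonneg (hf0 h h0) <| sub_nonneg.2 <|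
      monotoneOn_Ici_of_hasDerivAt hG hg0 h0 (h0.trans hh.2.le) hh.2.le
  have hcont : Continuous fun h ↦ f h * (G c₂ - G h) :=
    hf.mul (continuous_const.sub (continuous_iff_continuousAt.2 fun x ↦ (hG x).continuousAt))
  rw [show {ω | c₁ < X ω ∧ X ω < Y ω ∧ Y ω < c₂} =
      (fun ω ↦ (X ω, Y ω)) ⁻¹' {p | c₁ < p.1 ∧ p.1 < p.2 ∧ p.2 < c₂} from rfl,
    ← Measure.map_apply (hX.prodMk hY) hS,
    (indepFun_iff_map_prod_eq_prod_map_map hX.aemeasurable hY.aemeasurable).1 hXY, hμX, hμY,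
    prod_densityOnIci_lt_lt_lt hf hf0 hG hg hg0 hc₁,
    ← ofReal_integral_eq_lintegral_ofReal (hcont.integrableOn_Icc.mono_set Ioo_subset_Icc_self)
      ((ae_restrict_iff' measurableSet_Ioo).2 (Eventually.of_forall hnonneg)),
    ENNReal.toReal_ofReal (setIntegral_nonneg measurableSet_Ioo hnonneg),
    intervalIntegral.integral_of_le hc, integral_Ioc_eq_integral_Ioo]

end DensityOnIci

noncomputable def maxExpCDF (a : ℝ) (n : ℕ) (x : ℝ) : ℝ := (1 - exp (-(a * x))) ^ n

noncomputable def maxExpPDF (a : ℝ) (n : ℕ) (x : ℝ) : ℝ :=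
  n * a * exp (-(a * x)) * (1 - exp (-(a * x))) ^ (n - 1)

theorem hasDerivAt_maxExpCDF (a : ℝ) (n : ℕ) (x : ℝ) :
    HasDerivAt (maxExpCDF a n) (maxExpPDF a n x) x :=
  ((((hasDerivAt_id' x).const_mul a).fun_neg.exp.const_sub 1).pow n).congr_deriv
    (by simp only [maxExpPDF]; ring)

theorem maxExpCDF_zero (a : ℝ) {n : ℕ} (hn : n ≠ 0) : maxExpCDF a n 0 = 0 := by
  simp [maxExpCDF, hn]

theorem continuous_maxExpPDF (a : ℝ) (n : ℕ) : Continuous (maxExpPDF a n) := by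
  unfold maxExpPDF; fun_prop

theorem maxExpPDF_nonneg {a : ℝ} (ha : 0 ≤ a) (n : ℕ) {x : ℝ} (hx : 0 ≤ x) :
    0 ≤ maxExpPDF a n x := by
  have : 0 ≤ 1 - exp (-(a * x)) := sub_nonneg.2 (exp_le_one_iff.2 (by nlinarith))
  unfold maxExpPDF
  positivity

theorem maxExpCDF_eq_sum (a : ℝ) (n : ℕ) (x : ℝ) :
    maxExpCDF a n x =
      1 + ∑ m ∈ Finset.Icc 1 n, (-1) ^ m * (n.choose m : ℝ) * exp (-(m * a * x)) := by
  rw [maxExpCDF, one_sub_pow_eq_one_add_sum]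
  congr! 3 with m
  rw [← exp_nat_mul]
  ring_nf

theorem maxExpPDF_eq_sum (a : ℝ) (n : ℕ) (x : ℝ) :
    maxExpPDF a n x =
      ∑ m ∈ Finset.Icc 1 n, (-1) ^ (m + 1) * (n.choose m : ℝ) * (m * a * exp (-(m * a * x))) := by
  have hsum : HasDerivAt (maxExpCDF a n)
      (∑ m ∈ Finset.Icc 1 n, (-1) ^ m * (n.choose m : ℝ) * (exp (-(m * a * x)) * -(m * a))) x := by
    rw [show maxExpCDF a n = _ from funext (maxExpCDF_eq_sum a n)]
    exact (HasDerivAt.fun_sum fun m _ ↦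
      (((hasDerivAt_id' x).const_mul _).fun_neg.exp).const_mul _).const_add 1
      |>.congr_deriv (by simp)
  rw [(hasDerivAt_maxExpCDF a n x).unique hsum]
  refine Finset.sum_congr rfl fun m _ ↦ ?_
  ring

theorem integral_maxExpPDF_mul_sub {a b : ℝ} (ha : 0 < a) (hb : 0 < b) (M K : ℕ) (c₁ c₂ : ℝ) :
    ∫ h in c₁..c₂, maxExpPDF a M h * (maxExpCDF b K c₂ - maxExpCDF b K h) =
      ∑ m ∈ Finset.Icc 1 M, ∑ k ∈ Finset.Icc 1 K,
        (-1 : ℝ) ^ (m + k) * (M.choose m) * (K.choose k) *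
          (((m : ℝ) * a * exp (-(((m : ℝ) * a + (k : ℝ) * b) * c₁)) +
              (k : ℝ) * b * exp (-(((m : ℝ) * a + (k : ℝ) * b) * c₂))) /
            ((m : ℝ) * a + (k : ℝ) * b) -
            exp (-((m : ℝ) * a * c₁ + (k : ℝ) * b * c₂))) := by
  have hintegrand (h : ℝ) : maxExpPDF a M h * (maxExpCDF b K c₂ - maxExpCDF b K h) =
      ∑ m ∈ Finset.Icc 1 M, ∑ k ∈ Finset.Icc 1 K,
        (-1) ^ (m + 1) * (M.choose m : ℝ) * ((-1) ^ k * K.choose k) *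
          (m * a * exp (-(m * a * h)) * (exp (-(k * b * c₂)) - exp (-(k * b * h)))) := by
    rw [maxExpPDF_eq_sum, maxExpCDF_eq_sum, maxExpCDF_eq_sum, add_sub_add_left_eq_sub,
      ← Finset.sum_sub_distrib, Finset.sum_mul_sum]
    refine Finset.sum_congr rfl fun m _ ↦ Finset.sum_congr rfl fun k _ ↦ ?_
    ring
  simp_rw [hintegrand]
  rw [intervalIntegral.integral_finsetSum fun m _ ↦ Continuous.intervalIntegrable (by fun_prop) _ _]
  refine Finset.sum_congr rfl fun m hm ↦ ?_
  rw [intervalIntegral.integral_finsetSum fun k _ ↦ Continuous.intervalIntegrable (by fun_prop) _ _]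
  refine Finset.sum_congr rfl fun k hk ↦ ?_
  have hm : (0 : ℝ) < m := by exact_mod_cast (Finset.mem_Icc.1 hm).1
  have hk : (0 : ℝ) < k := by exact_mod_cast (Finset.mem_Icc.1 hk).1
  rw [intervalIntegral.integral_const_mul,
    integral_exp_mul_exp_sub_exp (by positivity) (by positivity)]
  ring

/-- If `H` and `G` are independent with CDFs `(1 - e^{-Ωh x})^M` and
`(1 - e^{-Ωg x})^K` for `x ≥ 0` (and `0` for `x < 0`), then for `0 ≤ c₁ < c₂`,
`P(c₁ < H < G < c₂)
  = Σ_{m=1}^{M} Σ_{k=1}^{K} (-1)^{m+k}·C(M,m)·C(K,k)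
      · ((m·Ωh·e^{-(m·Ωh+k·Ωg)·c₁} + k·Ωg·e^{-(m·Ωh+k·Ωg)·c₂})/(m·Ωh+k·Ωg)
          - e^{-(m·Ωh·c₁ + k·Ωg·c₂)})`. -/
theorem stmt9 {Ω : Type*} [MeasurableSpace Ω] (μ : Measure Ω) [IsProbabilityMeasure μ]
    (H G : Ω → ℝ) (hHm : Measurable H) (hGm : Measurable G)
    (M K : ℕ) (hM : 0 < M) (hK : 0 < K)
    (Ωh Ωg : ℝ) (hΩh : 0 < Ωh) (hΩg : 0 < Ωg)
    (hind : IndepFun H G μ)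
    (hHcdf : ∀ x : ℝ, 0 ≤ x → (μ {ω | H ω ≤ x}).toReal = (1 - exp (-(Ωh * x))) ^ M)
    (hHneg : ∀ x : ℝ, x < 0 → μ {ω | H ω ≤ x} = 0)
    (hGcdf : ∀ x : ℝ, 0 ≤ x → (μ {ω | G ω ≤ x}).toReal = (1 - exp (-(Ωg * x))) ^ K)
    (hGneg : ∀ x : ℝ, x < 0 → μ {ω | G ω ≤ x} = 0) :
    ∀ c₁ c₂ : ℝ, 0 ≤ c₁ → c₁ < c₂ →
      (μ {ω | c₁ < H ω ∧ H ω < G ω ∧ G ω < c₂}).toReal =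
        ∑ m ∈ Finset.Icc 1 M, ∑ k ∈ Finset.Icc 1 K,
          (-1 : ℝ) ^ (m + k) * (M.choose m) * (K.choose k) *
            (((m : ℝ) * Ωh * exp (-(((m : ℝ) * Ωh + (k : ℝ) * Ωg) * c₁)) +
                (k : ℝ) * Ωg * exp (-(((m : ℝ) * Ωh + (k : ℝ) * Ωg) * c₂))) /
              ((m : ℝ) * Ωh + (k : ℝ) * Ωg) -
              exp (-((m : ℝ) * Ωh * c₁ + (k : ℝ) * Ωg * c₂))) := by
  intro c₁ c₂ hc₁ hc
  have hlawH := map_eq_densityOnIci μ hHm (hasDerivAt_maxExpCDF Ωh M) (continuous_maxExpPDF Ωh M)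
    (fun _ ↦ maxExpPDF_nonneg hΩh.le M) (maxExpCDF_zero Ωh hM.ne') hHcdf hHneg
  have hlawG := map_eq_densityOnIci μ hGm (hasDerivAt_maxExpCDF Ωg K) (continuous_maxExpPDF Ωg K)
    (fun _ ↦ maxExpPDF_nonneg hΩg.le K) (maxExpCDF_zero Ωg hK.ne') hGcdf hGneg
  rw [hind.toReal_measure_lt_lt_lt hHm hGm hlawH hlawG (continuous_maxExpPDF Ωh M)
    (fun _ ↦ maxExpPDF_nonneg hΩh.le M) (hasDerivAt_maxExpCDF Ωg K) (continuous_maxExpPDF Ωg K)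
    (fun _ ↦ maxExpPDF_nonneg hΩg.le K) hc₁ hc.le]
  exact integral_maxExpPDF_mul_sub hΩh hΩg M K c₁ c₂
end

section
/- Let M, K be positive integers, Ω_h, Ω_g > 0, γ > 0, and define F(ρ) = 1 − (1 − (1 − e^{−Ω_h·γ/ρ})^M)·(1 − (1 − e^{−Ω_g·γ/ρ})^K) for ρ > 0. Then ρ^{min(M,K)}·F(ρ) tends, as ρ → ∞, to (Ω_h·γ)^M if M < K, to (Ω_g·γ)^K if K < M, and to (Ω_h·γ)^M + (Ω_g·γ)^M if M = K. Consequently, the per-antenna outage probability of the subset-based joint antenna selection decays like ρ^{−min(M,K)}, yielding diversity order N·min(M, K) for N independent base-station antennas. -/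
open Real Filter Topology

/-! Near `ρ = ∞` each factor `1 - e^{-c/ρ}` behaves like `c/ρ`, so `ρ^m (1 - e^{-c/ρ})^n`
tends to `c^n` if `n = m` and to `0` if `n > m`. Expanding
`F = (1 - e^{-a/ρ})^M + (1 - e^{-b/ρ})^K - (1 - e^{-a/ρ})^M (1 - e^{-b/ρ})^K`
(`a = Ωh γ`, `b = Ωg γ`) against `ρ^m` with `m = min M K`, only the terms of exponent
exactly `m` survive, and the product term is `o(ρ^{-m})` because `(1 - e^{-b/ρ})^K → 0`. -/

theorem HasDerivAt.tendsto_mul_comp_div_atTop {f : ℝ → ℝ} {f' : ℝ} (hf : HasDerivAt f f' 0)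
    (hf0 : f 0 = 0) (c : ℝ) :
    Tendsto (fun ρ => ρ * f (c / ρ)) atTop (𝓝 (c * f')) := by
  rcases eq_or_ne c 0 with rfl | hc
  · simp [hf0]
  have hslope : Tendsto (fun t => t⁻¹ * f t) (𝓝[≠] 0) (𝓝 f') := by
    simpa [hf0] using hf.tendsto_slope_zero
  have hdiv : Tendsto (fun ρ : ℝ => c / ρ) atTop (𝓝[≠] 0) :=
    tendsto_nhdsWithin_of_tendsto_nhds_of_eventually_within _
      (tendsto_const_nhds.div_atTop tendsto_id)
      (by filter_upwards [eventually_gt_atTop 0] with ρ hρ using div_ne_zero hc hρ.ne')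
  refine ((hslope.comp hdiv).const_mul c).congr' ?_
  filter_upwards [eventually_gt_atTop 0] with ρ hρ
  simp only [Function.comp_apply, inv_div]
  field_simp

theorem tendsto_mul_one_sub_exp_neg_div (c : ℝ) :
    Tendsto (fun ρ => ρ * (1 - exp (-(c / ρ)))) atTop (𝓝 c) := by
  have hf : HasDerivAt (fun x => 1 - exp (-x)) 1 0 := by
    simpa using ((hasDerivAt_exp (-0)).comp 0 (hasDerivAt_neg 0)).const_sub 1
  simpa using hf.tendsto_mul_comp_div_atTop (by simp) c

theorem tendsto_pow_mul_pow_of_tendsto_mul {u : ℝ → ℝ} {c : ℝ}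
    (hu : Tendsto (fun ρ => ρ * u ρ) atTop (𝓝 c)) {m n : ℕ} (hmn : m ≤ n) :
    Tendsto (fun ρ => ρ ^ m * u ρ ^ n) atTop (𝓝 (if m = n then c ^ n else 0)) := by
  obtain ⟨k, rfl⟩ := Nat.exists_eq_add_of_le hmn
  have hlim : Tendsto (fun ρ => (ρ * u ρ) ^ (m + k) * ρ⁻¹ ^ k) atTop
      (𝓝 (c ^ (m + k) * 0 ^ k)) :=
    (hu.pow _).mul (tendsto_inv_atTop_zero.pow k)
  have hval : c ^ (m + k) * 0 ^ k = if m = m + k then c ^ (m + k) else 0 := by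
    rcases k with _ | k <;> simp
  rw [← hval]
  refine hlim.congr' ?_
  filter_upwards [eventually_gt_atTop 0] with ρ hρ
  rw [mul_pow, pow_add, inv_pow]
  field_simp

theorem stmt11_general (M K : ℕ) (hK : 0 < K)
    (Ωh Ωg : ℝ) (γ : ℝ)
    (F : ℝ → ℝ)
    (hF : ∀ ρ : ℝ, 0 < ρ →
      F ρ = 1 - (1 - (1 - exp (-(Ωh * γ / ρ))) ^ M) *
              (1 - (1 - exp (-(Ωg * γ / ρ))) ^ K)) :
    Tendsto (fun ρ : ℝ => ρ ^ (min M K) * F ρ) atTop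
      (nhds (if M < K then (Ωh * γ) ^ M
             else if K < M then (Ωg * γ) ^ K
             else (Ωh * γ) ^ M + (Ωg * γ) ^ M)) := by
  have ha := tendsto_mul_one_sub_exp_neg_div (Ωh * γ)
  have hb := tendsto_mul_one_sub_exp_neg_div (Ωg * γ)
  have hA := tendsto_pow_mul_pow_of_tendsto_mul ha (min_le_left M K)
  have hB := tendsto_pow_mul_pow_of_tendsto_mul hb (min_le_right M K)
  have hB_zero := tendsto_pow_mul_pow_of_tendsto_mul hb (Nat.zero_le K)
  have hF_eq : ∀ᶠ ρ in atTop, ρ ^ min M K * (1 - exp (-(Ωh * γ / ρ))) ^ M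
        + ρ ^ min M K * (1 - exp (-(Ωg * γ / ρ))) ^ K
        - ρ ^ min M K * (1 - exp (-(Ωh * γ / ρ))) ^ M * (ρ ^ 0 * (1 - exp (-(Ωg * γ / ρ))) ^ K)
        = ρ ^ min M K * F ρ := by
    filter_upwards [eventually_gt_atTop 0] with ρ hρ
    rw [hF ρ hρ]
    ring
  convert ((hA.add hB).sub (hA.mul hB_zero)).congr' hF_eq using 2
  rcases lt_trichotomy M K with h | rfl | h
  · simp [h, h.ne, min_eq_left h.le, hK.ne]
  · simp [hK.ne]
  · simp [h, h.ne, min_eq_right h.le, hK.ne, not_lt.mpr h.le]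

/-- For positive integers `M, K`, rates `Ωh, Ωg > 0`, threshold
`γ > 0`, and `F ρ = 1 - (1 - (1 - e^{-Ωh·γ/ρ})^M)·(1 - (1 - e^{-Ωg·γ/ρ})^K)`,
the quantity `ρ^{min(M,K)}·F ρ` tends, as `ρ → ∞`, to `(Ωh·γ)^M` if `M < K`,
to `(Ωg·γ)^K` if `K < M`, and to `(Ωh·γ)^M + (Ωg·γ)^M` if `M = K`: the
per-antenna outage probability of the subset-based joint antenna selection decays
like `ρ^{-min(M,K)}`, i.e. diversity order `N·min(M,K)` for `N` antennas. -/
theorem stmt11 (M K : ℕ) (hM : 0 < M) (hK : 0 < K)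
    (Ωh Ωg : ℝ) (hΩh : 0 < Ωh) (hΩg : 0 < Ωg) (γ : ℝ) (hγ : 0 < γ)
    (F : ℝ → ℝ)
    (hF : ∀ ρ : ℝ, 0 < ρ →
      F ρ = 1 - (1 - (1 - exp (-(Ωh * γ / ρ))) ^ M) *
              (1 - (1 - exp (-(Ωg * γ / ρ))) ^ K)) :
    Tendsto (fun ρ : ℝ => ρ ^ (min M K) * F ρ) atTop
      (nhds (if M < K then (Ωh * γ) ^ M
             else if K < M then (Ωg * γ) ^ K
             else (Ωh * γ) ^ M + (Ωg * γ) ^ M)) :=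
  stmt11_general M K hK Ωh Ωg γ F hF
end

section
/- Let ρ > 0, γ > 0 and γ_s > 0, and set c₁ = γ/ρ and c₂ = γ_s·(γ + 1)/ρ. For all h, g > c₁, the secondary outage condition f(h, g) < γ_s holds if and only if either (g ≤ h and g < c₁ + c₂) or (h < g and g < γ_s·(γ + 1)·h/(h·ρ − γ)). -/
/-! On `h, g > γ/ρ` the SNR is `g·(m·ρ - γ)/((γ+1)·m)` with `m = min h g` and `m·ρ - γ > 0`.
If `g ≤ h` the factor `g` cancels and the SNR `(g·ρ - γ)/(γ+1)` is increasing in `g`; if `h < g`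
it is linear in `g` with positive slope. In both cases the outage condition is solved for `g`. -/

lemma self_mul_sub_div_mul_self_lt_iff {ρ γ γs g : ℝ} (hρ : 0 < ρ) (hγ : 0 < γ + 1) (hg : 0 < g) :
    g * (g * ρ - γ) / ((γ + 1) * g) < γs ↔ g < γ / ρ + γs * (γ + 1) / ρ := by
  have hcancel : g * (g * ρ - γ) / ((γ + 1) * g) = (g * ρ - γ) / (γ + 1) := by
    field_simp
  rw [hcancel, div_lt_iff₀ hγ, ← add_div, lt_div_iff₀ hρ]
  constructor <;> intro <;> linarith

lemma mul_sub_div_mul_lt_iff_lt_div {ρ γ γs h g : ℝ} (hγ : 0 < γ + 1) (hh : 0 < h)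
    (hhρ : 0 < h * ρ - γ) :
    g * (h * ρ - γ) / ((γ + 1) * h) < γs ↔ g < γs * (γ + 1) * h / (h * ρ - γ) := by
  rw [div_lt_iff₀ (by positivity), lt_div_iff₀ hhρ]
  constructor <;> intro <;> linarith

theorem stmt12_general (ρ γ γs : ℝ) (hρ : 0 < ρ) (hγ : 0 < γ)
    (f : ℝ → ℝ → ℝ)
    (hf : ∀ h g : ℝ, f h g =
      if γ / ρ < min h g then g * (min h g * ρ - γ) / ((γ + 1) * min h g) else 0)
    (c₁ c₂ : ℝ) (hc₁ : c₁ = γ / ρ) (hc₂ : c₂ = γs * (γ + 1) / ρ) :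
    ∀ h g : ℝ, c₁ < h → c₁ < g →
      (f h g < γs ↔
        (g ≤ h ∧ g < c₁ + c₂) ∨ (h < g ∧ g < γs * (γ + 1) * h / (h * ρ - γ))) := by
  subst hc₁ hc₂
  intro h g hh hg
  have hc₁ : 0 < γ / ρ := by positivity
  have hγ1 : 0 < γ + 1 := by linarith
  rw [hf, if_pos (lt_min hh hg)]
  rcases le_or_gt g h with hgh | hhg
  · rw [min_eq_right hgh, self_mul_sub_div_mul_self_lt_iff hρ hγ1 (hc₁.trans hg)]
    constructor
    · exact fun hlt => Or.inl ⟨hgh, hlt⟩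
    · rintro (⟨-, hlt⟩ | ⟨hhg, -⟩)
      · exact hlt
      · exact absurd hgh hhg.not_ge
  · have hhρ : 0 < h * ρ - γ := by
      rw [div_lt_iff₀ hρ] at hh
      linarith
    rw [min_eq_left hhg.le, mul_sub_div_mul_lt_iff_lt_div hγ1 (hc₁.trans hh) hhρ]
    constructor
    · exact fun hlt => Or.inr ⟨hhg, hlt⟩
    · rintro (⟨hgh, -⟩ | ⟨-, hlt⟩)
      · exact absurd hgh hhg.not_ge
      · exact hlt

/-- With `c₁ = γ/ρ` and `c₂ = γs·(γ+1)/ρ`, for all `h, g > c₁`,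
the secondary outage condition `f h g < γs` (with
`f h g = g·(min h g·ρ - γ)/((γ+1)·min h g)` when `min h g > γ/ρ`, else `0`)
holds iff `(g ≤ h ∧ g < c₁ + c₂)` or `(h < g ∧ g < γs·(γ+1)·h/(h·ρ - γ))`. -/
theorem stmt12 (ρ γ γs : ℝ) (hρ : 0 < ρ) (hγ : 0 < γ) (hγs : 0 < γs)
    (f : ℝ → ℝ → ℝ)
    (hf : ∀ h g : ℝ, f h g =
      if γ / ρ < min h g then g * (min h g * ρ - γ) / ((γ + 1) * min h g) else 0)
    (c₁ c₂ : ℝ) (hc₁ : c₁ = γ / ρ) (hc₂ : c₂ = γs * (γ + 1) / ρ) :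
    ∀ h g : ℝ, c₁ < h → c₁ < g →
      (f h g < γs ↔
        (g ≤ h ∧ g < c₁ + c₂) ∨ (h < g ∧ g < γs * (γ + 1) * h / (h * ρ - γ))) :=
  stmt12_general ρ γ γs hρ hγ f hf c₁ c₂ hc₁ hc₂
end
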